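/- arXiv:2307.16658 — 4 statements merged into one kernel-verified Lean document; each statement's English description precedes it below -/
import Mathlib

section
/- Let τ = (1+√5)/2 and let T be the (τ−1)-continued fraction map, T(x) = |1/x| − ⌊|1/x| + 2 − τ⌋, defined for irrational x in [τ−2, τ−1] \ {0}. Let ω ∈ [τ−2, τ−1] be a quadratic irrational. Then ω is purely periodic under T (i.e. T^[p](ω) = ω for some integer p ≥ 1) if and only if its Galois conjugate ω' satisfies ω' ≤ −2. -/
/-- The golden ratio `τ = (1 + √5)/2`. -/
noncomputable def goldenRatio' : ℝ := (1 + Real.sqrt 5) / 2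

/-- The `(τ-1)`-continued fraction map `T(x) = |1/x| - ⌊|1/x| + 2 - τ⌋` on irrationals in
`[τ-2, τ-1]`, extended by `0` at the remaining points. -/
noncomputable def alphaCFMap (x : ℝ) : ℝ :=
  open Classical in
  if Irrational x ∧ x ∈ Set.Icc (goldenRatio' - 2) (goldenRatio' - 1) then
    |1 / x| - (⌊|1 / x| + 2 - goldenRatio'⌋ : ℤ)
  else 0

/-!
Put `u = -1/x`. A branch `x ↦ ε/x - k` of `T` acts on `u`, and on `u' = -1/x'` for the Galois
conjugate `x'`, as the Möbius map `u ↦ 1/(k + εu)`; for the digits that occur these maps send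
`[0, 1/2]` into `(0, 1/2]`, and `x' ≤ -2` means `u' ∈ (0, 1/2]`.

If `T^[p] ω = ω`, the composite integral Möbius map fixes `-1/ω` and, by the intermediate value
theorem, some `t ∈ (0, 1/2]`. Its fixed-point quadratic has the irrational root `-1/ω`, so it is
proportional to the quadratic of `-1/ω`, and `-1/t` is the conjugate root `ω'`.

Conversely, `T` maps the reduced quadratic irrationals (`x' ≤ -2`) of a fixed discriminant into
themselves. There are finitely many of them, since their coefficients are bounded by the
discriminant, and `T` is injective on them, because the conjugate `-(k + εu')` of `T x`, with
`0 < u' < 1/2`, determines the digits `(ε, k)`. So `T` permutes this finite set.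
-/

open Set Function

theorem Set.InjOn.mem_periodicPts {α : Type*} {f : α → α} {s : Set α} (hinj : InjOn f s)
    (hs : s.Finite) (hmaps : MapsTo f s s) {x : α} (hx : x ∈ s) : x ∈ periodicPts f :=
  have : Finite s := hs.to_subtype
  Semiconj.mapsTo_periodicPts (g := Subtype.val) (fa := hmaps.restrict f s s) (fun _ ↦ rfl)
    ((hmaps.restrict_inj.mpr hinj).mem_periodicPts ⟨x, hx⟩)

theorem Irrational.eq_zero_of_intCast_mul_add_eq_zero {u : ℝ} (hu : Irrational u) {p q : ℤ}
    (h : p * u + q = 0) : p = 0 ∧ q = 0 := by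
  have hp : p = 0 := by
    by_contra hp
    exact ((hu.intCast_mul hp).add_intCast q).ne_int 0 (by simpa using h)
  subst hp
  exact ⟨rfl, by simpa using h⟩

theorem Irrational.quadratic_coeffs_proportional {u : ℝ} (hu : Irrational u)
    {a b c a' b' c' : ℤ} (h : a * u ^ 2 + b * u + c = 0) (h' : a' * u ^ 2 + b' * u + c' = 0) :
    a' * b = a * b' ∧ a' * c = a * c' := by
  have hlin : ((a' * b - a * b' : ℤ) : ℝ) * u + (a' * c - a * c' : ℤ) = 0 := by
    push_cast
    linear_combination a' * h - a * h'
  obtain ⟨h₁, h₂⟩ := hu.eq_zero_of_intCast_mul_add_eq_zero hlin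
  exact ⟨by linarith, by linarith⟩

theorem Irrational.quadratic_const_ne_zero {u : ℝ} (hu : Irrational u) {a b c : ℤ} (ha : a ≠ 0)
    (h : a * u ^ 2 + b * u + c = 0) : c ≠ 0 := by
  rintro rfl
  have : u * (a * u + b) = 0 := by linear_combination h
  rcases mul_eq_zero.mp this with h₀ | h₁
  · exact hu.ne_zero h₀
  · exact ha (hu.eq_zero_of_intCast_mul_add_eq_zero h₁).1

theorem Irrational.neg_div_sub {u : ℝ} (hu : Irrational u) (a b : ℤ) :
    Irrational (-(b : ℝ) / a - u) := by
  simpa using hu.ratCast_sub (q := -b / a)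

theorem quadratic_eq_zero_iff_of_eq_zero {K : Type*} [Field K] {a b c u v : K} (ha : a ≠ 0)
    (hu : a * u ^ 2 + b * u + c = 0) :
    a * v ^ 2 + b * v + c = 0 ↔ v = u ∨ v = -b / a - u := by
  have hb : a * (b / a) = b := mul_div_cancel₀ b ha
  have key : a * v ^ 2 + b * v + c = a * (v - u) * (v - (-b / a - u)) := by
    linear_combination hu - (v - u) * hb
  rw [key, mul_eq_zero, mul_eq_zero, sub_eq_zero, sub_eq_zero, or_iff_right ha]

theorem quadratic_neg_inv {K : Type*} [Field K] {a b c w : K} (hw : w ≠ 0)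
    (h : a * w ^ 2 + b * w + c = 0) : c * (-w⁻¹) ^ 2 - b * (-w⁻¹) + a = 0 := by
  field_simp
  linear_combination h

namespace AlphaCF

local notation "τ" => goldenRatio'

theorem one_lt_tau : 1 < τ := Real.one_lt_goldenRatio

theorem tau_lt_two : τ < 2 := Real.goldenRatio_lt_two

theorem tau_sq : τ ^ 2 = τ + 1 := Real.goldenRatio_sq

def domain : Set ℝ := {x | Irrational x ∧ x ∈ Icc (τ - 2) (τ - 1)}

/-- The digits `(ε, k)` for which `x ↦ ε / x - k` is a branch of `alphaCFMap`. -/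
def Admissible (ε k : ℤ) : Prop := ε = 1 ∧ 2 ≤ k ∨ ε = -1 ∧ 3 ≤ k

section Admissible

variable {ε k : ℤ}

theorem Admissible.sq_eq_one (h : Admissible ε k) : ε ^ 2 = 1 := by
  rcases h with ⟨rfl, -⟩ | ⟨rfl, -⟩ <;> rfl

theorem Admissible.ne_zero (h : Admissible ε k) : ε ≠ 0 := by
  rcases h with ⟨rfl, -⟩ | ⟨rfl, -⟩ <;> decide

theorem Admissible.two_le_add_mul (h : Admissible ε k) {y : ℝ} (hy : y ∈ Icc (0 : ℝ) (1 / 2)) :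
    2 ≤ k + ε * y := by
  obtain ⟨hy₀, hy₁⟩ := hy
  rcases h with ⟨rfl, hk⟩ | ⟨rfl, hk⟩
  · have : (2 : ℝ) ≤ k := by exact_mod_cast hk
    push_cast; linarith
  · have : (3 : ℝ) ≤ k := by exact_mod_cast hk
    push_cast; linarith

theorem Admissible.inv_add_mul_mem (h : Admissible ε k) {y : ℝ} (hy : y ∈ Icc (0 : ℝ) (1 / 2)) :
    (k + ε * y)⁻¹ ∈ Ioc (0 : ℝ) (1 / 2) := by
  have h2 := h.two_le_add_mul hy
  refine ⟨by positivity, ?_⟩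
  rw [one_div]
  exact inv_anti₀ two_pos h2

theorem Admissible.eq_of_add_mul_eq {ε' k' : ℤ} (h : Admissible ε k) (h' : Admissible ε' k')
    {y y' : ℝ} (hy : y ∈ Ioo (0 : ℝ) (1 / 2)) (hy' : y' ∈ Ioo (0 : ℝ) (1 / 2))
    (heq : k + ε * y = k' + ε' * y') : ε = ε' ∧ k = k' := by
  obtain ⟨hy₀, hy₁⟩ := hy
  obtain ⟨hy₀', hy₁'⟩ := hy'
  rcases h with ⟨rfl, -⟩ | ⟨rfl, -⟩ <;> rcases h' with ⟨rfl, -⟩ | ⟨rfl, -⟩ <;> push_cast at heq <;>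
  · have h₁ : k < k' + 1 := by exact_mod_cast (by linarith : (k : ℝ) < k' + 1)
    have h₂ : k' < k + 1 := by exact_mod_cast (by linarith : (k' : ℝ) < k + 1)
    obtain rfl : k = k' := by omega
    first
    | exact ⟨rfl, rfl⟩
    | exfalso; linarith

end Admissible

theorem neg_inv_mem_Ioc {x : ℝ} (hx : x ≤ -2) : -x⁻¹ ∈ Ioc (0 : ℝ) (1 / 2) := by
  rw [← inv_neg, one_div]
  exact ⟨inv_pos.mpr (by linarith), inv_anti₀ two_pos (by linarith)⟩

theorem neg_inv_mem_Ioo {x : ℝ} (hx : x < -2) : -x⁻¹ ∈ Ioo (0 : ℝ) (1 / 2) := by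
  rw [← inv_neg, one_div]
  exact ⟨inv_pos.mpr (by linarith), inv_strictAnti₀ two_pos (by linarith)⟩

section Step

variable {x : ℝ}

theorem alphaCFMap_of_mem (hx : x ∈ domain) :
    alphaCFMap x = |1 / x| - ⌊|1 / x| + 2 - τ⌋ :=
  if_pos hx

theorem alphaCFMap_mem_Icc (hx : x ∈ domain) : alphaCFMap x ∈ Icc (τ - 2) (τ - 1) := by
  have h₁ := Int.floor_le (|1 / x| + 2 - τ)
  have h₂ := Int.lt_floor_add_one (|1 / x| + 2 - τ)
  rw [alphaCFMap_of_mem hx]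
  constructor <;> linarith

theorem exists_admissible_alphaCFMap_eq (hx : x ∈ domain) :
    ∃ ε k : ℤ, Admissible ε k ∧ alphaCFMap x = ε / x - k := by
  have h1 := one_lt_tau
  have h2 := tau_lt_two
  have h3 := tau_sq
  rw [alphaCFMap_of_mem hx]
  obtain ⟨hirr, hlo, hhi⟩ := hx
  rcases hirr.ne_zero.lt_or_gt with hneg | hpos
  · -- `-1/x ≥ 1/(2-τ) = τ+1`
    have hinv : τ + 1 ≤ -(1 / x) := by
      rw [← div_neg, le_div_iff₀ (by linarith)]
      nlinarith
    refine ⟨-1, ⌊|1 / x| + 2 - τ⌋, Or.inr ⟨rfl, Int.le_floor.mpr ?_⟩, ?_⟩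
    · rw [abs_of_neg (one_div_neg.mpr hneg)]; push_cast; linarith
    · rw [abs_of_neg (one_div_neg.mpr hneg)]; push_cast; ring
  · -- `1/x ≥ 1/(τ-1) = τ`
    have hinv : τ ≤ 1 / x := by
      rw [le_div_iff₀ hpos]
      nlinarith
    refine ⟨1, ⌊|1 / x| + 2 - τ⌋, Or.inl ⟨rfl, Int.le_floor.mpr ?_⟩, ?_⟩
    · rw [abs_of_pos (one_div_pos.mpr hpos)]; push_cast; linarith
    · rw [abs_of_pos (one_div_pos.mpr hpos)]; push_cast; ring

theorem mapsTo_alphaCFMap_domain : MapsTo alphaCFMap domain domain := by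
  intro x hx
  refine ⟨?_, alphaCFMap_mem_Icc hx⟩
  obtain ⟨ε, k, hεk, heq⟩ := exists_admissible_alphaCFMap_eq hx
  rw [heq, div_eq_mul_inv]
  exact (hx.1.inv.intCast_mul hεk.ne_zero).sub_intCast k

end Step

section Forward

noncomputable def mobius (A B C D : ℤ) (y : ℝ) : ℝ := (A * y + B) / (C * y + D)

variable {A B C D : ℤ}

theorem mobius_succ_den (ε k : ℤ) {y : ℝ} (h : (C : ℝ) * y + D ≠ 0) :
    ((ε * A + k * C : ℤ) : ℝ) * y + (ε * B + k * D : ℤ) =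
      (C * y + D) * (k + ε * mobius A B C D y) := by
  unfold mobius
  push_cast
  field_simp
  ring

theorem mobius_succ (ε k : ℤ) {y : ℝ} (h : (C : ℝ) * y + D ≠ 0) :
    mobius C D (ε * A + k * C) (ε * B + k * D) y = (k + ε * mobius A B C D y)⁻¹ := by
  rw [mobius, mobius_succ_den ε k h, div_mul_cancel_left₀ h]

theorem quadratic_of_isFixedPt_mobius {y : ℝ} (hfix : IsFixedPt (mobius A B C D) y)
    (h : (C : ℝ) * y + D ≠ 0) : (C : ℝ) * y ^ 2 + (D - A : ℤ) * y + (-B : ℤ) = 0 := by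
  have := hfix.eq
  rw [mobius, div_eq_iff h] at this
  push_cast
  linear_combination -this

theorem exists_mobius_eq_iterate {x : ℝ} (hx : x ∈ domain) (n : ℕ) :
    ∃ A B C D : ℤ,
      (∀ y ∈ Icc (0 : ℝ) (1 / 2), 0 < (C : ℝ) * y + D ∧ mobius A B C D y ∈ Icc 0 (1 / 2)) ∧
      (0 < n → 0 < B) ∧ (C : ℝ) * -x⁻¹ + D ≠ 0 ∧
      mobius A B C D (-x⁻¹) = -(alphaCFMap^[n] x)⁻¹ := by
  induction n with
  | zero =>
    exact ⟨1, 0, 0, 1, fun y hy ↦ by simpa [mobius] using hy, by simp, by simp, by simp [mobius]⟩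
  | succ n ih =>
    obtain ⟨A, B, C, D, hmaps, -, hden, hval⟩ := ih
    obtain ⟨ε, k, hεk, hstep⟩ :=
      exists_admissible_alphaCFMap_eq (mapsTo_alphaCFMap_domain.iterate n hx)
    have hnext : (k : ℝ) + ε * -(alphaCFMap^[n] x)⁻¹ = -alphaCFMap^[n + 1] x := by
      rw [iterate_succ_apply', hstep]
      ring
    refine ⟨C, D, ε * A + k * C, ε * B + k * D, fun y hy ↦ ?_,
      fun _ ↦ by simpa using (hmaps 0 ⟨le_rfl, by norm_num⟩).1, ?_, ?_⟩
    · obtain ⟨hpos, hmem⟩ := hmaps y hy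
      refine ⟨?_, ?_⟩
      · rw [mobius_succ_den ε k hpos.ne']
        exact mul_pos hpos (by linarith [hεk.two_le_add_mul hmem])
      · rw [mobius_succ ε k hpos.ne']
        exact Ioc_subset_Icc_self (hεk.inv_add_mul_mem hmem)
    · rw [mobius_succ_den ε k hden, hval, hnext]
      exact mul_ne_zero hden
        (neg_ne_zero.mpr (mapsTo_alphaCFMap_domain.iterate (n + 1) hx).1.ne_zero)
    · rw [mobius_succ ε k hden, hval, hnext, inv_neg]

theorem conj_le_neg_two_of_iterate_eq {ω : ℝ} (hω : ω ∈ domain) {a b c : ℤ} (ha : a ≠ 0)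
    (hroot : (a : ℝ) * ω ^ 2 + b * ω + c = 0) {p : ℕ} (hp : 0 < p)
    (hper : alphaCFMap^[p] ω = ω) : -(b : ℝ) / a - ω ≤ -2 := by
  obtain ⟨A, B, C, D, hmaps, hB, hden, hval⟩ := exists_mobius_eq_iterate hω p
  have hcont : ContinuousOn (mobius A B C D) (Icc 0 (1 / 2)) :=
    ContinuousOn.div (by fun_prop) (by fun_prop) fun y hy ↦ (hmaps y hy).1.ne'
  obtain ⟨t, ht, hfix⟩ := exists_mem_Icc_isFixedPt_of_mapsTo hcont (by norm_num)
    fun y hy ↦ (hmaps y hy).2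
  have hQt := quadratic_of_isFixedPt_mobius hfix (hmaps t ht).1.ne'
  have hQu := quadratic_of_isFixedPt_mobius (y := -ω⁻¹) (by rw [IsFixedPt, hval, hper]) hden
  have hSu : (c : ℝ) * (-ω⁻¹) ^ 2 + (-b : ℤ) * (-ω⁻¹) + a = 0 := by
    push_cast
    linear_combination quadratic_neg_inv hω.1.ne_zero hroot
  have hc : c ≠ 0 := hω.1.quadratic_const_ne_zero ha hroot
  obtain ⟨h₁, h₂⟩ := hω.1.inv.neg.quadratic_coeffs_proportional hSu hQu
  have hB0 : B ≠ 0 := (hB hp).ne'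
  have hC : C ≠ 0 := by
    rintro rfl
    exact hB0 (by simpa [hc] using h₂)
  have hSt : (c : ℝ) * t ^ 2 + -b * t + a = 0 := by
    have h₁' : (C : ℝ) * -b = c * (D - A) := by exact_mod_cast h₁
    have h₂' : (C : ℝ) * a = c * -B := by exact_mod_cast h₂
    have : (C : ℝ) * (c * t ^ 2 + -b * t + a) = 0 := by
      push_cast at hQt
      linear_combination c * hQt + t * h₁' + h₂'
    exact (mul_eq_zero.mp this).resolve_left (by exact_mod_cast hC)
  have ht0 : t ≠ 0 := by
    rintro rfl
    have := hfix.eq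
    simp only [mobius, mul_zero, zero_add, div_eq_zero_iff, Int.cast_eq_zero] at this
    exact this.elim hB0 (by simpa using (hmaps 0 ⟨le_rfl, by norm_num⟩).1.ne')
  have hroot' : (a : ℝ) * (-t⁻¹) ^ 2 + b * (-t⁻¹) + c = 0 := by
    linear_combination quadratic_neg_inv ht0 hSt
  have hle : -t⁻¹ ≤ -2 := by
    have : 2 ≤ t⁻¹ := (le_inv_comm₀ two_pos (lt_of_le_of_ne ht.1 (Ne.symm ht0))).mpr
      (by linarith [ht.2])
    linarith
  rcases (quadratic_eq_zero_iff_of_eq_zero (by exact_mod_cast ha) hroot).mp hroot' with h | h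
  · linarith [hω.2.1, one_lt_tau]
  · rwa [← h]

end Forward

section Backward

/-- The Galois conjugate of a quadratic irrational `x` (junk value `0` if `x` is not a root of
an integral quadratic). -/
noncomputable def galoisConj (x : ℝ) : ℝ :=
  open Classical in
  if h : ∃ p : ℤ × ℤ × ℤ, p.1 ≠ 0 ∧ (p.1 : ℝ) * x ^ 2 + p.2.1 * x + p.2.2 = 0 then
    -(h.choose.2.1 : ℝ) / h.choose.1 - x
  else 0

variable {x : ℝ} {A B C : ℤ}

theorem galoisConj_eq (hx : Irrational x) (hA : A ≠ 0)
    (hroot : (A : ℝ) * x ^ 2 + B * x + C = 0) : galoisConj x = -(B : ℝ) / A - x := by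
  have hex : ∃ p : ℤ × ℤ × ℤ, p.1 ≠ 0 ∧ (p.1 : ℝ) * x ^ 2 + p.2.1 * x + p.2.2 = 0 :=
    ⟨(A, B, C), hA, hroot⟩
  rw [galoisConj, dif_pos hex]
  obtain ⟨hA', hroot'⟩ := hex.choose_spec
  generalize hex.choose = p at hA' hroot' ⊢
  have hB : (A : ℝ) * p.2.1 = p.1 * B := by
    exact_mod_cast (hx.quadratic_coeffs_proportional hroot' hroot).1
  have : (A : ℝ) ≠ 0 := by exact_mod_cast hA
  have : (p.1 : ℝ) ≠ 0 := by exact_mod_cast hA'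
  field_simp
  linear_combination -hB

theorem quadratic_div_sub (ε k : ℤ) (hx : x ≠ 0) (hroot : (A : ℝ) * x ^ 2 + B * x + C = 0) :
    (C : ℝ) * (ε / x - k) ^ 2 + (2 * C * k + B * ε : ℤ) * (ε / x - k) +
      (C * k ^ 2 + B * ε * k + A * ε ^ 2 : ℤ) = 0 := by
  push_cast
  field_simp
  linear_combination ε ^ 2 * hroot

theorem galoisConj_div_sub {ε : ℤ} (hε : ε ≠ 0) (k : ℤ) (hx : Irrational x) (hA : A ≠ 0)
    (hroot : (A : ℝ) * x ^ 2 + B * x + C = 0) :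
    galoisConj (ε / x - k) = ε / galoisConj x - k := by
  have hC := hx.quadratic_const_ne_zero hA hroot
  have hy : Irrational (ε / x - k) := by
    rw [div_eq_mul_inv]
    exact (hx.inv.intCast_mul hε).sub_intCast k
  rw [galoisConj_eq hy hC (quadratic_div_sub ε k hx.ne_zero hroot), galoisConj_eq hx hA hroot]
  have : (A : ℝ) ≠ 0 := by exact_mod_cast hA
  have : (C : ℝ) ≠ 0 := by exact_mod_cast hC
  have hx' : (-B - x * A : ℝ) ≠ 0 := by
    have := (hx.neg_div_sub A B).ne_zero
    contrapose! this
    field_simp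
    linear_combination this
  have := hx.ne_zero
  push_cast
  field_simp
  linear_combination ε * B * hroot

theorem abs_le_abs_two_mul_add (hx : x ∈ Icc (τ - 2) (τ - 1)) (hA : A ≠ 0)
    (hconj : -(B : ℝ) / A - x ≤ -2) :
    |(A : ℝ)| ≤ |2 * A * x + B| ∧ |(B : ℝ)| ≤ 3 * |2 * A * x + B| := by
  have hA' : (A : ℝ) ≠ 0 := by exact_mod_cast hA
  have hs : (2 * A * x + B : ℝ) = A * (x - (-B / A - x)) := by
    field_simp
    ring
  have hgap : 1 ≤ x - (-B / A - x) := by linarith [hx.1, one_lt_tau]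
  have hxabs : |x| ≤ 1 :=
    abs_le.mpr ⟨by linarith [hx.1, one_lt_tau], by linarith [hx.2, tau_lt_two]⟩
  have hAs : |(A : ℝ)| ≤ |2 * A * x + B| := by
    rw [hs, abs_mul, abs_of_pos (by linarith : (0 : ℝ) < x - (-B / A - x))]
    nlinarith [abs_nonneg (A : ℝ)]
  refine ⟨hAs, ?_⟩
  calc |(B : ℝ)| = |(2 * A * x + B) - 2 * A * x| := by ring_nf
    _ ≤ |2 * A * x + B| + 2 * |(A : ℝ)| * |x| := by
      refine (abs_sub _ _).trans ?_
      rw [abs_mul, abs_mul, abs_two]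
    _ ≤ 3 * |2 * A * x + B| := by nlinarith [abs_nonneg (A : ℝ)]

def reducedSet (D : ℤ) : Set ℝ :=
  {x | x ∈ domain ∧ galoisConj x ≤ -2 ∧
    ∃ A B C : ℤ, A ≠ 0 ∧ (A : ℝ) * x ^ 2 + B * x + C = 0 ∧ B ^ 2 - 4 * A * C = D}

theorem reducedSet_finite (D : ℤ) : (reducedSet D).Finite := by
  refine ((((finite_Icc (-(3 * D)) (3 * D)).prod (finite_Icc (-(3 * D)) (3 * D))).prod
    (toFinite {√(D : ℝ), -√(D : ℝ)})).image
    fun p : (ℤ × ℤ) × ℝ ↦ (p.2 - p.1.2) / (2 * p.1.1)).subset ?_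
  rintro x ⟨hxd, hconj, A, B, C, hA, hroot, rfl⟩
  rw [galoisConj_eq hxd.1 hA hroot] at hconj
  obtain ⟨hAs, hBs⟩ := abs_le_abs_two_mul_add hxd.2 hA hconj
  set s : ℝ := 2 * A * x + B with hs_def
  have hs : s ^ 2 = ((B ^ 2 - 4 * A * C : ℤ) : ℝ) := by
    push_cast
    linear_combination 4 * (A : ℝ) * hroot
  have hA1 : (1 : ℝ) ≤ |(A : ℝ)| := by exact_mod_cast Int.one_le_abs hA
  have hsD : |s| ≤ ((B ^ 2 - 4 * A * C : ℤ) : ℝ) := by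
    rw [← hs, ← sq_abs]
    nlinarith
  refine ⟨((A, B), s), ⟨⟨?_, ?_⟩, ?_⟩, ?_⟩
  · rw [mem_Icc, ← abs_le]
    exact_mod_cast (show ((|A| : ℤ) : ℝ) ≤ ((3 * (B ^ 2 - 4 * A * C) : ℤ) : ℝ) by
      push_cast at hsD ⊢; linarith)
  · rw [mem_Icc, ← abs_le]
    exact_mod_cast (show ((|B| : ℤ) : ℝ) ≤ ((3 * (B ^ 2 - 4 * A * C) : ℤ) : ℝ) by
      push_cast at hsD ⊢; linarith)
  · have : |s| = √((B ^ 2 - 4 * A * C : ℤ) : ℝ) := by rw [← hs, Real.sqrt_sq_eq_abs]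
    exact (abs_eq (Real.sqrt_nonneg _)).mp this
  · have : (A : ℝ) ≠ 0 := by exact_mod_cast hA
    simp only [hs_def]
    field_simp
    ring

theorem mapsTo_alphaCFMap_reducedSet (D : ℤ) :
    MapsTo alphaCFMap (reducedSet D) (reducedSet D) := by
  rintro x ⟨hxd, hconj, A, B, C, hA, hroot, rfl⟩
  obtain ⟨ε, k, hεk, hstep⟩ := exists_admissible_alphaCFMap_eq hxd
  refine ⟨mapsTo_alphaCFMap_domain hxd, ?_, C, 2 * C * k + B * ε,
    C * k ^ 2 + B * ε * k + A * ε ^ 2, hxd.1.quadratic_const_ne_zero hA hroot, ?_, ?_⟩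
  · rw [hstep, galoisConj_div_sub hεk.ne_zero k hxd.1 hA hroot]
    have := hεk.two_le_add_mul (Ioc_subset_Icc_self (neg_inv_mem_Ioc hconj))
    have : (ε : ℝ) / galoisConj x - k = -(k + ε * -(galoisConj x)⁻¹) := by ring
    linarith
  · rw [hstep]
    exact quadratic_div_sub ε k hxd.1.ne_zero hroot
  · linear_combination (B ^ 2 - 4 * A * C) * hεk.sq_eq_one

theorem injOn_alphaCFMap_reducedSet (D : ℤ) : InjOn alphaCFMap (reducedSet D) := by
  have key : ∀ x ∈ reducedSet D, ∃ ε k : ℤ, Admissible ε k ∧ alphaCFMap x = ε / x - k ∧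
      -(galoisConj x)⁻¹ ∈ Ioo (0 : ℝ) (1 / 2) ∧
      galoisConj (alphaCFMap x) = -(k + ε * -(galoisConj x)⁻¹) := by
    rintro x ⟨hxd, hconj, A, B, C, hA, hroot, -⟩
    obtain ⟨ε, k, hεk, hstep⟩ := exists_admissible_alphaCFMap_eq hxd
    have hirr : Irrational (galoisConj x) := by
      rw [galoisConj_eq hxd.1 hA hroot]
      exact hxd.1.neg_div_sub A B
    have hlt : galoisConj x < -2 := hconj.lt_of_ne (by exact_mod_cast hirr.ne_int (-2))
    refine ⟨ε, k, hεk, hstep, neg_inv_mem_Ioo hlt, ?_⟩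
    rw [hstep, galoisConj_div_sub hεk.ne_zero k hxd.1 hA hroot]
    ring
  intro x hx z hz hxz
  obtain ⟨ε, k, hεk, hx_eq, hyx, hconjx⟩ := key x hx
  obtain ⟨ε', k', hεk', hz_eq, hyz, hconjz⟩ := key z hz
  obtain ⟨rfl, rfl⟩ := hεk.eq_of_add_mul_eq hεk' hyx hyz
    (neg_injective (hconjx.symm.trans (hxz ▸ hconjz)))
  have hε : (ε : ℝ) ≠ 0 := by exact_mod_cast hεk.ne_zero
  rwa [hx_eq, hz_eq, sub_left_inj, div_eq_mul_inv, div_eq_mul_inv, mul_right_inj' hε,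
    inv_inj] at hxz

theorem mem_periodicPts_of_conj_le {ω : ℝ} (hω : ω ∈ domain) {a b c : ℤ} (ha : a ≠ 0)
    (hroot : (a : ℝ) * ω ^ 2 + b * ω + c = 0) (hconj : -(b : ℝ) / a - ω ≤ -2) :
    ω ∈ periodicPts alphaCFMap :=
  (injOn_alphaCFMap_reducedSet _).mem_periodicPts (reducedSet_finite _)
    (mapsTo_alphaCFMap_reducedSet _)
    ⟨hω, by rwa [galoisConj_eq hω.1 ha hroot], a, b, c, ha, hroot, rfl⟩

end Backward

end AlphaCF

/-- A quadratic irrational `ω ∈ [τ-2, τ-1]` is purely periodic under the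
`(τ-1)`-continued fraction map iff its Galois conjugate `ω' = -b/a - ω` satisfies
`ω' ≤ -2`. -/
theorem alphaCF_purely_periodic_iff
    (ω : ℝ) (hmem : ω ∈ Set.Icc (goldenRatio' - 2) (goldenRatio' - 1))
    (hirr : Irrational ω)
    (a b c : ℤ) (ha : a ≠ 0)
    (hroot : (a : ℝ) * ω ^ 2 + (b : ℝ) * ω + (c : ℝ) = 0) :
    (∃ p : ℕ, 1 ≤ p ∧ alphaCFMap^[p] ω = ω) ↔ -(b : ℝ) / (a : ℝ) - ω ≤ -2 := by
  constructor
  · rintro ⟨p, hp, hper⟩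
    exact AlphaCF.conj_le_neg_two_of_iterate_eq ⟨hirr, hmem⟩ ha hroot hp hper
  · intro hconj
    exact mem_periodicPts.mp (AlphaCF.mem_periodicPts_of_conj_le ⟨hirr, hmem⟩ ha hroot hconj)
end

section
/- Let ω ∈ (0,1) be a quadratic irrational with C^[p](ω) = ω for some integer p ≥ 1, where C is the Ceiling map C(x) = ⌈1/x⌉ − 1/x. Let R be the Rényi map R(y) = −1/y − ⌈−1/y⌉ on (−1,0). Then ψ := −1/ω' lies in (−1,0), R^[p](ψ) = ψ, and for every integer t with 0 ≤ t ≤ p one has R^[t](ψ) = −1/(C^[p−t](ω))', where (·)' denotes Galois conjugation. -/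
/-- The Ceiling map `x ↦ ⌈1/x⌉ - 1/x` on irrationals in `(0,1)`, extended by `0` elsewhere. -/
noncomputable def ceilingMap (x : ℝ) : ℝ :=
  open Classical in
  if Irrational x ∧ x ∈ Set.Ioo (0 : ℝ) 1 then ⌈1 / x⌉ - 1 / x else 0

/-- The Rényi map `y ↦ -1/y - ⌈-1/y⌉` on irrationals in `(-1,0)`, extended by `0` elsewhere. -/
noncomputable def renyiMap (y : ℝ) : ℝ :=
  open Classical in
  if Irrational y ∧ y ∈ Set.Ioo (-1 : ℝ) 0 then -1 / y - ⌈-1 / y⌉ else 0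

/-!
Write `x_k = C^[k] ω`, `n_k = ⌈1/x_k⌉ ≥ 2` and `σ_k` for the conjugate of `x_k`, so that
`x_{k+1} = n_k - 1/x_k` and `σ_{k+1} = n_k - 1/σ_k`. Once `σ_k > 1` this persists, `ψ_k = -1/σ_k`
lies in `(-1,0)` and `⌈-1/ψ_{k+1}⌉ = ⌈n_k + ψ_k⌉ = n_k`, so `R(ψ_{k+1}) = ψ_k`: the Rényi map runs
the conjugate orbit backwards, and `σ_p = σ_0` closes the loop.

Periodicity forces `σ_0 = ω' > 1`: `σ_k < 0` gives `σ_{k+1} > 1`, while for `σ_k ∈ (0,1]` the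
difference `x_{k+1} - σ_{k+1} = (x_k - σ_k)/(x_k σ_k)` grows strictly in absolute value. So if
`ω' ≤ 1`, either some `σ_k` exceeds 1 and then so does `σ_p = ω'`, or
`|ω - ω'| = |x_p - σ_p| > |x_0 - σ_0| = |ω - ω'|`.
-/

open Set

/-- For irrational `x`, this says that `y` is the other root of the minimal polynomial of `x`. -/
def IsGaloisConj (x y : ℝ) : Prop :=
  ∃ s q : ℚ, x + y = s ∧ x * y = q

lemma isGaloisConj_of_root {x : ℝ} {a b c : ℤ} (ha : a ≠ 0)
    (hroot : (a : ℝ) * x ^ 2 + b * x + c = 0) : IsGaloisConj x (-(b : ℝ) / a - x) := by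
  have ha' : (a : ℝ) ≠ 0 := Int.cast_ne_zero.mpr ha
  refine ⟨-b / a, c / a, ?_, ?_⟩
  · push_cast; ring
  · push_cast
    field_simp
    linear_combination -hroot

namespace IsGaloisConj

variable {x y y' : ℝ}

lemma irrational (hx : Irrational x) (h : IsGaloisConj x y) : Irrational y := by
  obtain ⟨s, q, hs, -⟩ := h
  simpa [← hs] using hx.ratCast_sub s

lemma ne (hx : Irrational x) (h : IsGaloisConj x y) : x ≠ y := by
  obtain ⟨s, q, hs, -⟩ := h
  rintro rfl
  exact hx.ne_rat (s / 2) (by push_cast; linarith)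

lemma eq (hx : Irrational x) (h : IsGaloisConj x y) (h' : IsGaloisConj x y') : y = y' := by
  obtain ⟨s, q, hs, hq⟩ := h
  obtain ⟨s', q', hs', hq'⟩ := h'
  by_contra hne
  have hd : s' - s ≠ 0 := fun hd => hne (by
    have : (s' : ℝ) = s := by exact_mod_cast sub_eq_zero.mp hd
    linarith)
  refine (hx.mul_ratCast hd).ne_rat (q' - q) ?_
  have : y' - y = s' - s := by linarith
  push_cast
  rw [← this]
  linear_combination hq' - hq

lemma sub_one_div (h : IsGaloisConj x y) (hx : x ≠ 0) (hy : y ≠ 0) (n : ℤ) :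
    IsGaloisConj (n - 1 / x) (n - 1 / y) := by
  obtain ⟨s, q, hs, hq⟩ := h
  have hq0 : (q : ℝ) ≠ 0 := hq ▸ mul_ne_zero hx hy
  refine ⟨2 * n - s / q, n ^ 2 - n * s / q + 1 / q, ?_, ?_⟩
  · push_cast
    rw [← hs, ← hq]
    field_simp
    ring
  · push_cast
    rw [← hs, ← hq]
    field_simp
    ring

end IsGaloisConj

lemma two_le_ceil_one_div {x : ℝ} (hx : x ∈ Ioo (0 : ℝ) 1) : 2 ≤ ⌈1 / x⌉ := by
  have : (1 : ℝ) < 1 / x := by rw [lt_div_iff₀ hx.1]; linarith [hx.2]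
  have : (1 : ℤ) < ⌈1 / x⌉ := Int.lt_ceil.mpr (by exact_mod_cast this)
  omega

lemma ceilingMap_of_mem {x : ℝ} (hirr : Irrational x) (hx : x ∈ Ioo (0 : ℝ) 1) :
    ceilingMap x = ⌈1 / x⌉ - 1 / x :=
  if_pos ⟨hirr, hx⟩

lemma mapsTo_ceilingMap :
    MapsTo ceilingMap {x | Irrational x ∧ x ∈ Ioo (0 : ℝ) 1}
      {x | Irrational x ∧ x ∈ Ioo (0 : ℝ) 1} := by
  rintro x ⟨hirr, hx⟩
  have hinv : Irrational (1 / x) := by simpa only [one_div] using hirr.inv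
  rw [mem_ofPred_eq, ceilingMap_of_mem hirr hx]
  refine ⟨hinv.intCast_sub _, ?_, ?_⟩
  · linarith [(Int.le_ceil (1 / x)).lt_of_ne (hinv.ne_int _)]
  · linarith [Int.ceil_lt_add_one (1 / x)]

lemma iterate_ceilingMap_mem {ω : ℝ} (hirr : Irrational ω) (hω : ω ∈ Ioo (0 : ℝ) 1) (k : ℕ) :
    Irrational (ceilingMap^[k] ω) ∧ ceilingMap^[k] ω ∈ Ioo (0 : ℝ) 1 :=
  mapsTo_ceilingMap.iterate k ⟨hirr, hω⟩

lemma iterate_ceilingMap_succ {ω : ℝ} (hirr : Irrational ω) (hω : ω ∈ Ioo (0 : ℝ) 1) (k : ℕ) :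
    ceilingMap^[k + 1] ω = ⌈1 / ceilingMap^[k] ω⌉ - 1 / ceilingMap^[k] ω := by
  obtain ⟨hirr', hω'⟩ := iterate_ceilingMap_mem hirr hω k
  rw [Function.iterate_succ_apply', ceilingMap_of_mem hirr' hω']

lemma neg_one_div_mem_Ioo {s : ℝ} (hs : 1 < s) : -1 / s ∈ Ioo (-1 : ℝ) 0 := by
  have hs0 : 0 < s := by linarith
  constructor
  · rw [lt_div_iff₀ hs0]; linarith
  · exact div_neg_of_neg_of_pos (by norm_num) hs0

lemma one_lt_sub_one_div {n : ℤ} (hn : 2 ≤ n) {s : ℝ} (hs : 1 < s) : 1 < n - 1 / s := by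
  have : 1 / s < 1 := (div_lt_one (by linarith)).mpr hs
  have : (2 : ℝ) ≤ n := by exact_mod_cast hn
  linarith

lemma renyiMap_neg_one_div_sub_one_div {n : ℤ} (hn : 2 ≤ n) {s : ℝ} (hirr : Irrational s)
    (hs : 1 < s) : renyiMap (-1 / (n - 1 / s)) = -1 / s := by
  have hs' := one_lt_sub_one_div hn hs
  have hirr' : Irrational (-1 / (n - 1 / s)) := by
    simpa only [neg_div, one_div] using ((hirr.inv.intCast_sub n).inv).neg
  have hceil : ⌈(n : ℝ) - 1 / s⌉ = n := by
    rw [Int.ceil_eq_iff]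
    have : 0 < 1 / s := by positivity
    have : 1 / s < 1 := (div_lt_one (by linarith)).mpr hs
    constructor <;> linarith
  have hinv : -1 / (-1 / ((n : ℝ) - 1 / s)) = n - 1 / s := by
    field_simp [(by linarith : (n : ℝ) - 1 / s ≠ 0)]
  rw [renyiMap, if_pos ⟨hirr', neg_one_div_mem_Ioo hs'⟩, hinv, hceil]
  ring

lemma iterate_apply_eq_of_apply_succ {α : Type*} {f : α → α} {u : ℕ → α}
    (hu : ∀ k, f (u (k + 1)) = u k) {t m : ℕ} (ht : t ≤ m) : f^[t] (u m) = u (m - t) := by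
  induction t with
  | zero => rfl
  | succ t ih =>
    rw [Function.iterate_succ_apply', ih (by omega), show m - t = m - (t + 1) + 1 by omega, hu]

lemma one_lt_sub_one_div_or_abs_sub_lt {n : ℤ} (hn : 2 ≤ n) {x s : ℝ} (hx : x ∈ Ioo (0 : ℝ) 1)
    (hs : s ≠ 0) (hxs : x ≠ s) : 1 < n - 1 / s ∨ |x - s| < |(n - 1 / x) - (n - 1 / s)| := by
  have hn' : (2 : ℝ) ≤ n := by exact_mod_cast hn
  rcases hs.lt_or_gt with hs | hs
  · left
    have : 1 / s < 0 := one_div_neg.mpr hs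
    linarith
  rcases lt_or_ge 1 s with h1 | h1
  · exact .inl (one_lt_sub_one_div hn h1)
  right
  have hxs_pos : 0 < x * s := mul_pos hx.1 hs
  have hxs_lt : x * s < 1 := by nlinarith [hx.2]
  have hd : 0 < |x - s| := abs_pos.mpr (sub_ne_zero.mpr hxs)
  have : (n - 1 / x) - (n - 1 / s) = (x - s) / (x * s) := by
    field_simp [hx.1.ne', hs.ne']
    ring
  rw [this, abs_div, abs_of_pos hxs_pos, lt_div_iff₀ hxs_pos]
  nlinarith

noncomputable def conjOrbit (ω ω' : ℝ) : ℕ → ℝ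
  | 0 => ω'
  | k + 1 => ⌈1 / ceilingMap^[k] ω⌉ - 1 / conjOrbit ω ω' k

section

variable {ω ω' : ℝ}

lemma isGaloisConj_conjOrbit (hirr : Irrational ω) (hω : ω ∈ Ioo (0 : ℝ) 1)
    (h : IsGaloisConj ω ω') (k : ℕ) : IsGaloisConj (ceilingMap^[k] ω) (conjOrbit ω ω' k) := by
  induction k with
  | zero => exact h
  | succ k ih =>
    have hirr_k := (iterate_ceilingMap_mem hirr hω k).1
    rw [iterate_ceilingMap_succ hirr hω]
    exact ih.sub_one_div hirr_k.ne_zero (ih.irrational hirr_k).ne_zero _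

lemma irrational_conjOrbit (hirr : Irrational ω) (hω : ω ∈ Ioo (0 : ℝ) 1)
    (h : IsGaloisConj ω ω') (k : ℕ) : Irrational (conjOrbit ω ω' k) :=
  (isGaloisConj_conjOrbit hirr hω h k).irrational (iterate_ceilingMap_mem hirr hω k).1

lemma conjOrbit_eq_of_iterate_ceilingMap_eq (hirr : Irrational ω) (hω : ω ∈ Ioo (0 : ℝ) 1)
    (h : IsGaloisConj ω ω') {p : ℕ} (hper : ceilingMap^[p] ω = ω) : conjOrbit ω ω' p = ω' := by
  have hp := isGaloisConj_conjOrbit hirr hω h p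
  rw [hper] at hp
  exact hp.eq hirr h

lemma one_lt_conjOrbit_or_abs_sub_lt (hirr : Irrational ω) (hω : ω ∈ Ioo (0 : ℝ) 1)
    (h : IsGaloisConj ω ω') {k : ℕ} (hk : 1 ≤ k) :
    1 < conjOrbit ω ω' k ∨ |ω - ω'| < |ceilingMap^[k] ω - conjOrbit ω ω' k| := by
  have step (k : ℕ) : 1 < conjOrbit ω ω' (k + 1) ∨
      |ceilingMap^[k] ω - conjOrbit ω ω' k| <
        |ceilingMap^[k + 1] ω - conjOrbit ω ω' (k + 1)| := by
    obtain ⟨hirr_k, hω_k⟩ := iterate_ceilingMap_mem hirr hω k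
    have hconj_k := isGaloisConj_conjOrbit hirr hω h k
    rw [iterate_ceilingMap_succ hirr hω]
    exact one_lt_sub_one_div_or_abs_sub_lt (two_le_ceil_one_div hω_k) hω_k
      (hconj_k.irrational hirr_k).ne_zero (hconj_k.ne hirr_k)
  induction k, hk using Nat.le_induction with
  | base => exact step 0
  | succ k _ ih =>
    rcases ih with ih | ih
    · exact .inl (one_lt_sub_one_div
        (two_le_ceil_one_div (iterate_ceilingMap_mem hirr hω k).2) ih)
    · exact (step k).imp_right ih.trans

lemma one_lt_of_iterate_ceilingMap_eq (hirr : Irrational ω) (hω : ω ∈ Ioo (0 : ℝ) 1)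
    (h : IsGaloisConj ω ω') {p : ℕ} (hp : 1 ≤ p) (hper : ceilingMap^[p] ω = ω) : 1 < ω' := by
  have key := one_lt_conjOrbit_or_abs_sub_lt hirr hω h hp
  rw [hper, conjOrbit_eq_of_iterate_ceilingMap_eq hirr hω h hper] at key
  exact key.resolve_right (lt_irrefl _)

lemma one_lt_conjOrbit (hirr : Irrational ω) (hω : ω ∈ Ioo (0 : ℝ) 1) (h1 : 1 < ω') (k : ℕ) :
    1 < conjOrbit ω ω' k := by
  induction k with
  | zero => exact h1
  | succ k ih =>
    exact one_lt_sub_one_div (two_le_ceil_one_div (iterate_ceilingMap_mem hirr hω k).2) ih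

lemma renyiMap_neg_one_div_conjOrbit_succ (hirr : Irrational ω) (hω : ω ∈ Ioo (0 : ℝ) 1)
    (h : IsGaloisConj ω ω') (h1 : 1 < ω') (k : ℕ) :
    renyiMap (-1 / conjOrbit ω ω' (k + 1)) = -1 / conjOrbit ω ω' k :=
  renyiMap_neg_one_div_sub_one_div (two_le_ceil_one_div (iterate_ceilingMap_mem hirr hω k).2)
    (irrational_conjOrbit hirr hω h k) (one_lt_conjOrbit hirr hω h1 k)

end

/-- If `ω ∈ (0,1)` is a quadratic irrational purely periodic of period `p` for the Ceiling
map `C`, then `ψ = -1/ω'` lies in `(-1,0)`, is purely periodic of period `p` for the Rényi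
map `R`, and `R^[t](ψ) = -1/(C^[p-t](ω))'` for `0 ≤ t ≤ p`, where `'` is Galois
conjugation. -/
theorem ceiling_renyi_duality
    (ω : ℝ) (hmem : ω ∈ Set.Ioo (0 : ℝ) 1) (hirr : Irrational ω)
    (a b c : ℤ) (ha : a ≠ 0)
    (hroot : (a : ℝ) * ω ^ 2 + (b : ℝ) * ω + (c : ℝ) = 0)
    (p : ℕ) (hp : 1 ≤ p) (hper : ceilingMap^[p] ω = ω) :
    -1 / (-(b : ℝ) / (a : ℝ) - ω) ∈ Set.Ioo (-1 : ℝ) 0 ∧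
    renyiMap^[p] (-1 / (-(b : ℝ) / (a : ℝ) - ω)) = -1 / (-(b : ℝ) / (a : ℝ) - ω) ∧
    ∀ t : ℕ, t ≤ p →
      ∀ a' b' c' : ℤ, a' ≠ 0 →
        (a' : ℝ) * (ceilingMap^[p - t] ω) ^ 2 + (b' : ℝ) * (ceilingMap^[p - t] ω) +
          (c' : ℝ) = 0 →
        renyiMap^[t] (-1 / (-(b : ℝ) / (a : ℝ) - ω)) =
          -1 / (-(b' : ℝ) / (a' : ℝ) - ceilingMap^[p - t] ω) := by
  set ω' := -(b : ℝ) / a - ω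
  have hconj : IsGaloisConj ω ω' := isGaloisConj_of_root ha hroot
  have h1 : 1 < ω' := one_lt_of_iterate_ceilingMap_eq hirr hmem hconj hp hper
  have hR (t : ℕ) (ht : t ≤ p) : renyiMap^[t] (-1 / ω') = -1 / conjOrbit ω ω' (p - t) := by
    have h := iterate_apply_eq_of_apply_succ (u := fun k ↦ -1 / conjOrbit ω ω' k)
      (renyiMap_neg_one_div_conjOrbit_succ hirr hmem hconj h1) ht
    rwa [conjOrbit_eq_of_iterate_ceilingMap_eq hirr hmem hconj hper] at h
  refine ⟨neg_one_div_mem_Ioo h1, by simpa [conjOrbit] using hR p le_rfl, fun t ht a' b' c' ha' hroot' => ?_⟩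
  rw [hR t ht, (isGaloisConj_conjOrbit hirr hmem hconj (p - t)).eq
    (iterate_ceilingMap_mem hirr hmem (p - t)).1 (isGaloisConj_of_root ha' hroot')]
end

section
/- Let α be a type and let A be a set of nonempty lists over α that is a code: any two finite factorizations of the same list into elements of A coincide. Let a, b : ℕ → A be sequences of elements of A such that their infinite concatenations define the same infinite word, i.e. for all m, n ∈ ℕ one of the lists a 0 ++ ⋯ ++ a m and b 0 ++ ⋯ ++ b n is a prefix of the other. If a is purely periodic, i.e. there exists an integer p ≥ 1 with a (t+p) = a t for all t, then a t = b t for every t ∈ ℕ. -/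
/-!
Put `u = a 0 ++ ⋯ ++ a (p - 1)`. By periodicity the common infinite word is `u u u ⋯`, so every
partial concatenation `B n = b 0 ++ ⋯ ++ b n` is a prefix of a power of `u`. By pigeonhole there
are `i + t < j` with `|B i| ≡ |B j| (mod |u|)`, say `|B j| = d |u| + |B i|`; as both are prefixes
of `u u u ⋯`, this forces `B j = u ^ d ++ B i`. The two sides are factorized over `A` as
`b 0, …, b j` and `a 0, …, a (d p - 1), b 0, …, b i`, so the code property makes these lists equal;
then `d p = j - i > t`, and their `t`-th entries give `a t = b t`.
-/

namespace List

variable {α : Type*}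

theorem length_flatten_replicate (n : ℕ) (l : List α) :
    (replicate n l).flatten.length = n * l.length := by
  simp [length_flatten, sum_replicate]

theorem range_prefix_range {m n : ℕ} (h : m ≤ n) : range m <+: range n := by
  rw [← Nat.min_eq_left h, ← take_range]
  exact take_prefix _ _

theorem map_range_mul_eq_flatten_replicate {β : Type*} {f : ℕ → β} {p : ℕ}
    (hf : Function.Periodic f p) (k : ℕ) :
    (range (k * p)).map f = (replicate k ((range p).map f)).flatten := by
  induction k with
  | zero => simp
  | succ k ih =>
    rw [Nat.succ_mul, range_add, map_append, ih, replicate_succ', flatten_append,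
      flatten_singleton, map_map]
    congr 2
    funext x
    simpa [add_comm] using hf.nat_mul k x

theorem eq_flatten_replicate_append_of_isPrefix {x y u : List α} {d K : ℕ}
    (hx : x <+: (replicate K u).flatten) (hy : y <+: (replicate (d + K) u).flatten)
    (hlen : y.length = d * u.length + x.length) : y = (replicate d u).flatten ++ x := by
  have hx' : (replicate d u).flatten ++ x <+: (replicate (d + K) u).flatten := by
    rw [replicate_add, flatten_append]
    exact (prefix_append_right_inj _).2 hx
  have hlen' : y.length = ((replicate d u).flatten ++ x).length := by
    rw [length_append, length_flatten_replicate, hlen]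
  exact (prefix_of_prefix_length_le hy hx' hlen'.le).eq_of_length hlen'

end List

theorem Nat.exists_add_lt_modEq (f : ℕ → ℕ) {k : ℕ} (hk : 0 < k) (s : ℕ) :
    ∃ i j, i + s < j ∧ f i ≡ f j [MOD k] := by
  obtain ⟨m, -, n, -, hmn, h⟩ := Set.infinite_univ.exists_lt_map_eq_of_mapsTo
    (f := fun n => f ((s + 1) * n) % k) (fun n _ => show _ ∈ Set.Iio k from Nat.mod_lt _ hk)
    (Set.finite_Iio k)
  exact ⟨(s + 1) * m, (s + 1) * n, by nlinarith, h⟩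

open List in
theorem flatten_map_range_isPrefix_flatten_replicate {α : Type*} {a b : ℕ → List α} {p : ℕ}
    (hp : 1 ≤ p) (hper : Function.Periodic a p) (hu : ((range p).map a).flatten ≠ [])
    (hagree : ∀ m n : ℕ,
      ((range (m + 1)).map a).flatten <+: ((range (n + 1)).map b).flatten ∨
      ((range (n + 1)).map b).flatten <+: ((range (m + 1)).map a).flatten)
    {n K : ℕ} (hK : ((range (n + 1)).map b).flatten.length < K) :
    ((range (n + 1)).map b).flatten <+: (replicate K ((range p).map a).flatten).flatten := by
  have hKp : K * p - 1 + 1 = K * p := by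
    have : 0 < K * p := Nat.mul_pos (by omega) hp
    omega
  have hpow :
      ((range (K * p)).map a).flatten = (replicate K ((range p).map a).flatten).flatten := by
    rw [map_range_mul_eq_flatten_replicate hper, flatten_flatten, map_replicate]
  have hcomp := hagree (K * p - 1) n
  rw [hKp, hpow] at hcomp
  refine hcomp.resolve_left fun h => ?_
  have hlen := h.length_le
  rw [length_flatten_replicate] at hlen
  have : K ≤ K * ((range p).map a).flatten.length :=
    Nat.le_mul_of_pos_right _ (length_pos_iff.2 hu)
  omega

/-- If `A` is a code of nonempty words and two `A`-factorizations `a`, `b` define the same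
infinite word (every pair of finite partial concatenations is prefix-comparable), and `a`
is purely periodic, then `a = b`. -/
theorem code_purely_periodic_unique_factorization {α : Type*} (A : Set (List α))
    (hne : ∀ w ∈ A, w ≠ [])
    (hcode : ∀ us vs : List (List α), (∀ u ∈ us, u ∈ A) → (∀ v ∈ vs, v ∈ A) →
      us.flatten = vs.flatten → us = vs)
    (a b : ℕ → List α) (ha : ∀ t, a t ∈ A) (hb : ∀ t, b t ∈ A)
    (hagree : ∀ m n : ℕ,
      ((List.range (m + 1)).map a).flatten <+: ((List.range (n + 1)).map b).flatten ∨
      ((List.range (n + 1)).map b).flatten <+: ((List.range (m + 1)).map a).flatten)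
    (p : ℕ) (hp : 1 ≤ p) (hper : ∀ t, a (t + p) = a t) :
    ∀ t, a t = b t := by
  intro t
  set u := ((List.range p).map a).flatten
  set B : ℕ → List α := fun n => ((List.range (n + 1)).map b).flatten
  have hu : u ≠ [] := fun h =>
    hne (a 0) (ha 0) (List.flatten_eq_nil_iff.1 h _ (List.mem_map_of_mem (List.mem_range.2 hp)))
  have hBu {n K : ℕ} (hK : (B n).length < K) : B n <+: (List.replicate K u).flatten :=
    flatten_map_range_isPrefix_flatten_replicate hp hper hu hagree hK
  obtain ⟨i, j, hij, hmod⟩ := Nat.exists_add_lt_modEq (fun n => (B n).length)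
    (List.length_pos_iff.2 hu) t
  have hlen : (B i).length ≤ (B j).length :=
    ((List.range_prefix_range (by omega)).map b).flatten.length_le
  obtain ⟨d, hd⟩ := (Nat.modEq_iff_dvd' hlen).1 hmod
  rw [mul_comm] at hd
  have hBj : B j = (List.replicate d u).flatten ++ B i :=
    List.eq_flatten_replicate_append_of_isPrefix (hBu (K := (B j).length + 1) (by omega))
      (hBu (by omega)) (by omega)
  have hfac :
      (List.range (j + 1)).map b = (List.range (d * p)).map a ++ (List.range (i + 1)).map b := by
    apply hcode
    · simp [hb]
    · simp only [List.mem_append, List.mem_map]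
      rintro _ (⟨k, -, rfl⟩ | ⟨k, -, rfl⟩)
      exacts [ha k, hb k]
    · rw [List.flatten_append, List.map_range_mul_eq_flatten_replicate hper,
        List.flatten_flatten, List.map_replicate]
      exact hBj
  have hdp : t < d * p := by
    have := congrArg List.length hfac
    simp only [List.length_map, List.length_append, List.length_range] at this
    omega
  simpa [List.getElem?_append_left, hdp, show t < j + 1 by omega] using
    (congrArg (·[t]?) hfac).symm
end

section
/- Let α be a type and let A be a finite set of nonempty lists over α that is a code: any two finite factorizations of the same list into elements of A coincide. Then there exists an integer M ≥ 1, depending only on A, such that for every function x : ℕ → α the set of sequences a : ℕ → A whose infinite concatenation equals x has cardinality at most M. -/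
/-!
Call the lengths of the partial concatenations of a factorization its cut points. Since `A` is
a code, two factorizations of `x` sharing a cut point agree up to it; hence two distinct
factorizations share only finitely many cut points. Given `L + 1` factorizations, where `L`
bounds the word lengths in `A`, choose `N` beyond all their pairwise common cut points: each of
them has a cut point in the window `(N, N + L]`, and these cut points are pairwise distinct,
which is impossible.
-/

/-- The infinite concatenation of the sequence of words `a` equals the infinite word `x`:
for every position `n` some partial concatenation is long enough and has entry `x n`
at position `n`. -/
def InfiniteConcatEq {α : Type*} (a : ℕ → List α) (x : ℕ → α) : Prop :=
  ∀ n : ℕ, ∃ T : ℕ, (((List.range T).map a).flatten)[n]? = some (x n)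

open Filter

section

variable {α : Type*}

def prefixConcat (a : ℕ → List α) (T : ℕ) : List α := ((List.range T).map a).flatten

lemma prefixConcat_prefix (a : ℕ → List α) {T T' : ℕ} (h : T ≤ T') :
    prefixConcat a T <+: prefixConcat a T' := by
  obtain ⟨k, rfl⟩ := Nat.exists_eq_add_of_le h
  rw [prefixConcat, prefixConcat, List.range_add, List.map_append, List.flatten_append]
  exact List.prefix_append _ _

lemma length_prefixConcat_succ (a : ℕ → List α) (T : ℕ) :
    (prefixConcat a (T + 1)).length = (prefixConcat a T).length + (a T).length := by
  simp [prefixConcat, List.range_succ]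

namespace InfiniteConcatEq

variable {a : ℕ → List α} {x : ℕ → α}

lemma exists_lt_length_prefixConcat (hx : InfiniteConcatEq a x) (n : ℕ) :
    ∃ T, n < (prefixConcat a T).length :=
  (hx n).imp fun _ hT => (List.getElem?_eq_some_iff.mp hT).1

lemma getElem?_prefixConcat (hx : InfiniteConcatEq a x) {n T : ℕ}
    (hn : n < (prefixConcat a T).length) : (prefixConcat a T)[n]? = some (x n) := by
  obtain ⟨T', hT'⟩ : ∃ T', (prefixConcat a T')[n]? = some (x n) := hx n
  rcases le_total T T' with h | h
  · obtain ⟨r, hr⟩ := prefixConcat_prefix a h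
    rw [← hT', ← hr, List.getElem?_append_left hn]
  · obtain ⟨r, hr⟩ := prefixConcat_prefix a h
    rw [← hr, List.getElem?_append_left (List.getElem?_eq_some_iff.mp hT').1, hT']

lemma prefixConcat_eq (hx : InfiniteConcatEq a x) (T : ℕ) :
    prefixConcat a T = (List.range (prefixConcat a T).length).map x := by
  refine List.ext_getElem? fun n => ?_
  rcases lt_or_ge n (prefixConcat a T).length with h | h
  · simp [hx.getElem?_prefixConcat h, List.getElem?_range h]
  · rw [List.getElem?_eq_none h, List.getElem?_eq_none (by simpa using h)]

lemma exists_length_prefixConcat_mem_Ioc (hx : InfiniteConcatEq a x) {L : ℕ}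
    (hL : ∀ t, (a t).length ≤ L) (N : ℕ) :
    ∃ T, (prefixConcat a T).length ∈ Finset.Ioc N (N + L) := by
  classical
  have hex := hx.exists_lt_length_prefixConcat N
  refine ⟨Nat.find hex, Finset.mem_Ioc.mpr ⟨Nat.find_spec hex, ?_⟩⟩
  obtain ⟨T, hT⟩ : ∃ T, Nat.find hex = T + 1 :=
    Nat.exists_eq_add_one_of_ne_zero fun h0 => by
      have h0spec := Nat.find_spec hex
      rw [h0] at h0spec
      simp [prefixConcat] at h0spec
  have hmin : ¬ N < (prefixConcat a T).length := Nat.find_min hex (by omega)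
  rw [hT, length_prefixConcat_succ]
  linarith [hL T]

end InfiniteConcatEq

def IsCode (A : Set (List α)) : Prop :=
  ∀ us vs : List (List α), (∀ u ∈ us, u ∈ A) → (∀ v ∈ vs, v ∈ A) →
    us.flatten = vs.flatten → us = vs

def factorizations (A : Set (List α)) (x : ℕ → α) : Set (ℕ → List α) :=
  {a | (∀ t, a t ∈ A) ∧ InfiniteConcatEq a x}

namespace IsCode

variable {A : Set (List α)} {x : ℕ → α} {a b : ℕ → List α}

lemma eq_of_length_prefixConcat_eq (hA : IsCode A) (ha : a ∈ factorizations A x)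
    (hb : b ∈ factorizations A x) {m n : ℕ}
    (h : (prefixConcat a m).length = (prefixConcat b n).length) :
    m = n ∧ ∀ i < m, a i = b i := by
  have hmap : (List.range m).map a = (List.range n).map b := by
    refine hA _ _ (by simpa using fun i _ => ha.1 i) (by simpa using fun i _ => hb.1 i) ?_
    rw [← prefixConcat, ← prefixConcat, ha.2.prefixConcat_eq, hb.2.prefixConcat_eq, h]
  obtain rfl : m = n := by simpa using congrArg List.length hmap
  refine ⟨rfl, fun i hi => ?_⟩
  simpa [List.getElem?_range hi] using congrArg (·[i]?) hmap

lemma eventually_common_cut_le (hA : IsCode A) (ha : a ∈ factorizations A x)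
    (hb : b ∈ factorizations A x) (hab : a ≠ b) :
    ∀ᶠ N in atTop, ∀ m n, (prefixConcat a m).length = (prefixConcat b n).length →
      (prefixConcat a m).length ≤ N := by
  obtain ⟨d, hd⟩ := Function.ne_iff.mp hab
  filter_upwards [eventually_ge_atTop (prefixConcat a d).length] with N hN m n h
  have hmd : m ≤ d := by
    by_contra! hdm
    exact hd ((hA.eq_of_length_prefixConcat_eq ha hb h).2 d hdm)
  exact ((prefixConcat_prefix a hmd).length_le).trans hN

lemma card_le_of_subset_factorizations (hA : IsCode A) {L : ℕ} (hL : ∀ w ∈ A, w.length ≤ L)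
    {s : Finset (ℕ → List α)} (hs : ↑s ⊆ factorizations A x) : s.card ≤ L := by
  obtain ⟨N, hN⟩ := ((eventually_all_finset s.offDiag).mpr fun p hp => by
    obtain ⟨h1, h2, h12⟩ := Finset.mem_offDiag.mp hp
    exact hA.eventually_common_cut_le (hs h1) (hs h2) h12).exists
  choose! T hT using fun a (ha : a ∈ s) =>
    (hs ha).2.exists_length_prefixConcat_mem_Ioc (fun t => hL _ ((hs ha).1 t)) N
  calc s.card ≤ (Finset.Ioc N (N + L)).card := by
        refine Finset.card_le_card_of_injOn (fun a => (prefixConcat a (T a)).length) hT ?_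
        intro a ha b hb h
        by_contra hab
        have hcommon := hN (a, b) (Finset.mem_offDiag.mpr ⟨ha, hb, hab⟩) (T a) (T b) h
        exact (Finset.mem_Ioc.mp (hT a ha)).1.not_ge hcommon
    _ = L := by simp

end IsCode

end

lemma Set.finite_and_ncard_le_of_forall_finset_card_le {β : Type*} {s : Set β} {L : ℕ}
    (h : ∀ t : Finset β, ↑t ⊆ s → t.card ≤ L) : s.Finite ∧ s.ncard ≤ L := by
  have hs : s.Finite := by
    by_contra hinf
    obtain ⟨t, hts, hcard⟩ := Set.Infinite.exists_subset_card_eq hinf (L + 1)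
    have := h t hts
    omega
  exact ⟨hs, (Set.ncard_eq_toFinset_card s hs).trans_le (h _ (by simp))⟩

theorem finite_code_bounded_fibers_general {α : Type*} (A : Set (List α)) (hfin : A.Finite)
    (hcode : ∀ us vs : List (List α), (∀ u ∈ us, u ∈ A) → (∀ v ∈ vs, v ∈ A) →
      us.flatten = vs.flatten → us = vs) :
    ∃ M : ℕ, 1 ≤ M ∧ ∀ x : ℕ → α,
      {a : ℕ → List α | (∀ t, a t ∈ A) ∧ InfiniteConcatEq a x}.Finite ∧
      {a : ℕ → List α | (∀ t, a t ∈ A) ∧ InfiniteConcatEq a x}.ncard ≤ M := by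
  obtain ⟨L, hL⟩ := (hfin.image List.length).bddAbove
  have hlen : ∀ w ∈ A, w.length ≤ L := fun w hw => hL (Set.mem_image_of_mem _ hw)
  refine ⟨max L 1, le_max_right _ _, fun x => ?_⟩
  obtain ⟨hS, hcard⟩ := Set.finite_and_ncard_le_of_forall_finset_card_le fun s hs =>
    IsCode.card_le_of_subset_factorizations (x := x) hcode hlen hs
  exact ⟨hS, hcard.trans (le_max_left _ _)⟩

/-- For a finite code `A` of nonempty words there is a uniform bound `M ≥ 1` on the
number of `A`-factorizations of any infinite word. -/
theorem finite_code_bounded_fibers {α : Type*} (A : Set (List α)) (hfin : A.Finite)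
    (hne : ∀ w ∈ A, w ≠ [])
    (hcode : ∀ us vs : List (List α), (∀ u ∈ us, u ∈ A) → (∀ v ∈ vs, v ∈ A) →
      us.flatten = vs.flatten → us = vs) :
    ∃ M : ℕ, 1 ≤ M ∧ ∀ x : ℕ → α,
      {a : ℕ → List α | (∀ t, a t ∈ A) ∧ InfiniteConcatEq a x}.Finite ∧
      {a : ℕ → List α | (∀ t, a t ∈ A) ∧ InfiniteConcatEq a x}.ncard ≤ M :=
  finite_code_bounded_fibers_general A hfin hcode
end
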